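/- Let H be a 3-uniform hypergraph containing no linear path of length s + 1, and let P = (x₀, x₁, ..., x_{2s}) be a linear path of length s in H. Then for each i ∈ {0, 1, 2s−1, 2s}, every edge e of H with x_i ∈ e satisfies |e ∩ {x₀, x₁, ..., x_{2s}}| ≥ 2. -/

import Mathlib

/-- The degree of a vertex `v` in a hypergraph with edge set `E`:
the number of edges containing `v`. -/
def hdegree {V : Type*} [DecidableEq V] (E : Finset (Finset V)) (v : V) : ℕ :=
  (E.filter (fun e => v ∈ e)).card

/-- The hypergraph with edge set `E` contains a linear path of length `k`:
a collection of `k` (distinct) edges `e₁, …, e_k` such that `|eᵢ ∩ e_j| = 1`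
if `|i - j| = 1` and `eᵢ ∩ e_j = ∅` otherwise. -/
def HasLinearPath {V : Type*} [DecidableEq V] (E : Finset (Finset V)) (k : ℕ) : Prop :=
  ∃ f : Fin k → Finset V, Function.Injective f ∧ (∀ i, f i ∈ E) ∧
    ∀ i j : Fin k, i ≠ j →
      (((i : ℕ) + 1 = j ∨ (j : ℕ) + 1 = i) → (f i ∩ f j).card = 1) ∧
      (¬((i : ℕ) + 1 = j ∨ (j : ℕ) + 1 = i) → f i ∩ f j = ∅)

/-- `x = (x₀, x₁, …, x_{2t})` is a linear path of length `t` in the hypergraph with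
edge set `E`: the `2t+1` vertices are distinct and `{x_{2i}, x_{2i+1}, x_{2i+2}} ∈ E`
for each `i ∈ [0, t-1]`. -/
def IsLinearPathSeq {V : Type*} [DecidableEq V] (E : Finset (Finset V)) (t : ℕ)
    (x : Fin (2 * t + 1) → V) : Prop :=
  Function.Injective x ∧
  ∀ i : Fin t,
    ({x ⟨2 * i, by have := i.isLt; omega⟩,
      x ⟨2 * i + 1, by have := i.isLt; omega⟩,
      x ⟨2 * i + 2, by have := i.isLt; omega⟩} : Finset V) ∈ E

/-- `dP E x a b` is the number of vertices `y` outside the path `x` such that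
`{x_a, x_b, y}` is an edge; this is `d_P(a, b)` in the paper. -/
def dP {V : Type*} [Fintype V] [DecidableEq V] (E : Finset (Finset V)) {t : ℕ}
    (x : Fin (2 * t + 1) → V) (a b : Fin (2 * t + 1)) : ℕ :=
  (Finset.univ.filter
    (fun y => (∀ i, y ≠ x i) ∧ ({x a, x b, y} : Finset V) ∈ E)).card

/-- The function `g(n,t)` from the paper:
`g(n,t) = ((t-1)/2)n + (3/2)t² - (9/2)t + 6` for odd `t`, and
`g(n,t) = ((t-2)/2)n + (3/2)t² - (5/2)t + 6` for even `t`. -/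
def gQ (n t : ℕ) : ℚ :=
  if Odd t then ((t : ℚ) - 1) / 2 * n + 3 / 2 * t ^ 2 - 9 / 2 * t + 6
  else ((t : ℚ) - 2) / 2 * n + 3 / 2 * t ^ 2 - 5 / 2 * t + 6

/-! If an edge `e` through `x₀` or `x₁` met the path in no other vertex, then `e` followed by the
edges `{x_{2j}, x_{2j+1}, x_{2j+2}}` would be a linear path of length `s + 1`. The vertices
`x_{2s-1}` and `x_{2s}` are handled by reading the path backwards. -/

section LinearPaths

variable {V : Type*} [DecidableEq V]

def IsLinearChain {k : ℕ} (f : Fin k → Finset V) : Prop :=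
  ∀ i j : Fin k, i ≠ j →
    (((i : ℕ) + 1 = j ∨ (j : ℕ) + 1 = i) → (f i ∩ f j).card = 1) ∧
    (¬((i : ℕ) + 1 = j ∨ (j : ℕ) + 1 = i) → f i ∩ f j = ∅)

namespace IsLinearChain

variable {k : ℕ} {f : Fin k → Finset V}

/-- Two equal sets of a linear chain would meet in at most one vertex. -/
theorem injective (hf : IsLinearChain f) (hcard : ∀ i, 2 ≤ (f i).card) :
    Function.Injective f := by
  intro i j hij
  by_contra hne
  have hself : (f i ∩ f j).card ≤ 1 := by
    by_cases hadj : (i : ℕ) + 1 = j ∨ (j : ℕ) + 1 = i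
    · exact ((hf i j hne).1 hadj).le
    · simp [(hf i j hne).2 hadj]
  rw [hij, Finset.inter_self] at hself
  exact absurd (hcard j) (by omega)

theorem cons (hf : IsLinearChain f) {e : Finset V}
    (hfirst : ∀ j : Fin k, (j : ℕ) = 0 → (e ∩ f j).card = 1)
    (hrest : ∀ j : Fin k, (j : ℕ) ≠ 0 → e ∩ f j = ∅) :
    IsLinearChain (Fin.cons e f : Fin (k + 1) → Finset V) := by
  have hhead : ∀ j : Fin k,
      ((j : ℕ) = 0 → (e ∩ f j).card = 1) ∧ ((j : ℕ) ≠ 0 → e ∩ f j = ∅) :=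
    fun j => ⟨hfirst j, hrest j⟩
  intro i j hij
  cases i using Fin.cases with
  | zero =>
    cases j using Fin.cases with
    | zero => exact absurd rfl hij
    | succ j => simpa [eq_comm] using hhead j
  | succ i =>
    cases j using Fin.cases with
    | zero => simpa [Finset.inter_comm, eq_comm] using hhead i
    | succ j => simpa using hf i j (fun h => hij (congrArg Fin.succ h))

end IsLinearChain

theorem hasLinearPath_succ {E : Finset (Finset V)} (hE : ∀ e ∈ E, 2 ≤ e.card) {k : ℕ}
    {f : Fin k → Finset V} (hf : IsLinearChain f) (hfE : ∀ j, f j ∈ E)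
    {e : Finset V} (he : e ∈ E)
    (hfirst : ∀ j : Fin k, (j : ℕ) = 0 → (e ∩ f j).card = 1)
    (hrest : ∀ j : Fin k, (j : ℕ) ≠ 0 → e ∩ f j = ∅) :
    HasLinearPath E (k + 1) := by
  have hmem : ∀ j, (Fin.cons e f : Fin (k + 1) → Finset V) j ∈ E :=
    Fin.cases he hfE
  have hchain := hf.cons hfirst hrest
  exact ⟨_, hchain.injective fun j => hE _ (hmem j), hmem, hchain⟩

section PathEdges

variable {s : ℕ} (x : Fin (2 * s + 1) → V)

def pathEdge (j : Fin s) : Finset V :=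
  {x ⟨2 * j, by omega⟩, x ⟨2 * j + 1, by omega⟩, x ⟨2 * j + 2, by omega⟩}

variable {x}

theorem mem_pathEdge {j : Fin s} {v : V} :
    v ∈ pathEdge x j ↔ ∃ m, x m = v ∧ 2 * (j : ℕ) ≤ m ∧ (m : ℕ) ≤ 2 * j + 2 := by
  simp only [pathEdge, Finset.mem_insert, Finset.mem_singleton]
  constructor
  · rintro (rfl | rfl | rfl) <;> exact ⟨_, rfl, by simp only; omega⟩
  · rintro ⟨m, rfl, hlo, hhi⟩
    obtain h | h | h : (m : ℕ) = 2 * j ∨ (m : ℕ) = 2 * j + 1 ∨ (m : ℕ) = 2 * j + 2 := by omega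
    all_goals simp [← h]

theorem apply_mem_pathEdge_iff (hx : Function.Injective x) {j : Fin s} {m : Fin (2 * s + 1)} :
    x m ∈ pathEdge x j ↔ 2 * (j : ℕ) ≤ m ∧ (m : ℕ) ≤ 2 * j + 2 := by
  simp [mem_pathEdge, hx.eq_iff]

theorem isLinearChain_pathEdge (hx : Function.Injective x) : IsLinearChain (pathEdge x) := by
  intro a b hab
  have hmem : ∀ v, v ∈ pathEdge x a ∩ pathEdge x b ↔ ∃ m, x m = v ∧
      (2 * (a : ℕ) ≤ m ∧ (m : ℕ) ≤ 2 * a + 2) ∧ (2 * (b : ℕ) ≤ m ∧ (m : ℕ) ≤ 2 * b + 2) := by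
    intro v
    rw [Finset.mem_inter, mem_pathEdge]
    constructor
    · rintro ⟨⟨m, rfl, hm⟩, hb⟩
      exact ⟨m, rfl, hm, (apply_mem_pathEdge_iff hx).1 hb⟩
    · rintro ⟨m, rfl, hma, hmb⟩
      exact ⟨⟨m, rfl, hma⟩, (apply_mem_pathEdge_iff hx).2 hmb⟩
  have hab' : (a : ℕ) ≠ b := Fin.val_injective.ne hab
  constructor
  · intro hadj
    rw [Finset.card_eq_one]
    refine ⟨x ⟨2 * max (a : ℕ) b, by have := a.isLt; have := b.isLt; omega⟩, Finset.ext fun v => ?_⟩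
    rw [hmem, Finset.mem_singleton]
    constructor
    · rintro ⟨m, rfl, hma, hmb⟩
      exact congrArg x (Fin.ext (by simp only; omega))
    · rintro rfl
      exact ⟨_, rfl, by simp only; omega⟩
  · intro hfar
    refine Finset.eq_empty_of_forall_notMem fun v hv => ?_
    obtain ⟨m, -, hma, hmb⟩ := (hmem v).1 hv
    omega

theorem pathEdge_comp_rev (j : Fin s) : pathEdge (x ∘ Fin.rev) j = pathEdge x j.rev := by
  ext v
  simp only [mem_pathEdge, Function.comp_apply]
  constructor
  · rintro ⟨m, rfl, hm⟩
    exact ⟨m.rev, rfl, by simp only [Fin.val_rev] at hm ⊢; omega⟩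
  · rintro ⟨m, rfl, hm⟩
    exact ⟨m.rev, by rw [Fin.rev_rev], by simp only [Fin.val_rev] at hm ⊢; omega⟩

theorem IsLinearPathSeq.comp_rev {E : Finset (Finset V)} (hx : IsLinearPathSeq E s x) :
    IsLinearPathSeq E s (x ∘ Fin.rev) :=
  ⟨hx.1.comp Fin.rev_injective, fun j => by
    rw [← pathEdge, pathEdge_comp_rev]
    exact hx.2 j.rev⟩

end PathEdges

theorem two_le_card_inter_of_apply_mem_of_le_one {E : Finset (Finset V)}
    (hE : ∀ e ∈ E, 2 ≤ e.card) {s : ℕ} (hfree : ¬ HasLinearPath E (s + 1))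
    {x : Fin (2 * s + 1) → V} (hx : IsLinearPathSeq E s x) {i : Fin (2 * s + 1)}
    (hi : (i : ℕ) ≤ 1) {e : Finset V} (he : e ∈ E) (hxe : x i ∈ e) :
    2 ≤ (e ∩ Finset.univ.image x).card := by
  by_contra hlt
  have honly : ∀ m, x m ∈ e → m = i := fun m hm =>
    hx.1 <| Finset.card_le_one.1 (by omega) _
      (Finset.mem_inter.2 ⟨hm, Finset.mem_image_of_mem x (Finset.mem_univ m)⟩) _
      (Finset.mem_inter.2 ⟨hxe, Finset.mem_image_of_mem x (Finset.mem_univ i)⟩)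
  have hsub : ∀ j, e ∩ pathEdge x j ⊆ {x i} := by
    intro j v hv
    obtain ⟨hve, hvj⟩ := Finset.mem_inter.1 hv
    obtain ⟨m, rfl, -⟩ := mem_pathEdge.1 hvj
    rw [honly m hve]
    exact Finset.mem_singleton_self _
  refine hfree (hasLinearPath_succ hE (isLinearChain_pathEdge hx.1) hx.2 he ?_ ?_)
  · intro j hj
    refine Finset.card_eq_one.2 ⟨x i, (hsub j).antisymm ?_⟩
    exact Finset.singleton_subset_iff.2
      (Finset.mem_inter.2 ⟨hxe, (apply_mem_pathEdge_iff hx.1).2 (by omega)⟩)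
  · intro j hj
    refine Finset.subset_empty.1 fun v hv => ?_
    obtain rfl := Finset.mem_singleton.1 (hsub j hv)
    have := (apply_mem_pathEdge_iff hx.1).1 (Finset.mem_inter.1 hv).2
    omega

end LinearPaths

theorem edge_through_near_endpoint_meets_path_twice_general
    (s : ℕ)
    (V : Type*) [DecidableEq V]
    (E : Finset (Finset V)) (hE : ∀ e ∈ E, e.card = 3)
    (hfree : ¬ HasLinearPath E (s + 1))
    (x : Fin (2 * s + 1) → V) (hx : IsLinearPathSeq E s x) :
    ∀ i : Fin (2 * s + 1),
      ((i : ℕ) = 0 ∨ (i : ℕ) = 1 ∨ (i : ℕ) = 2 * s - 1 ∨ (i : ℕ) = 2 * s) →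
      ∀ e ∈ E, x i ∈ e → 2 ≤ (e ∩ Finset.univ.image x).card := by
  intro i hi e he hxe
  have hE' : ∀ e ∈ E, 2 ≤ e.card := fun e he => (hE e he).ge.trans' (by norm_num)
  rcases (by rw [Fin.val_rev]; omega : (i : ℕ) ≤ 1 ∨ (i.rev : ℕ) ≤ 1) with hstart | hend
  · exact two_le_card_inter_of_apply_mem_of_le_one hE' hfree hx hstart he hxe
  · have hrev := two_le_card_inter_of_apply_mem_of_le_one hE' hfree hx.comp_rev hend he
      (by rwa [Function.comp_apply, Fin.rev_rev])
    rwa [← Finset.image_image, Finset.image_univ_of_surjective Fin.rev_surjective] at hrev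

theorem edge_through_near_endpoint_meets_path_twice
    (s : ℕ)
    (V : Type*) [Fintype V] [DecidableEq V]
    (E : Finset (Finset V)) (hE : ∀ e ∈ E, e.card = 3)
    (hfree : ¬ HasLinearPath E (s + 1))
    (x : Fin (2 * s + 1) → V) (hx : IsLinearPathSeq E s x) :
    ∀ i : Fin (2 * s + 1),
      ((i : ℕ) = 0 ∨ (i : ℕ) = 1 ∨ (i : ℕ) = 2 * s - 1 ∨ (i : ℕ) = 2 * s) →
      ∀ e ∈ E, x i ∈ e → 2 ≤ (e ∩ Finset.univ.image x).card :=
  edge_through_near_endpoint_meets_path_twice_general s V E hE hfree x hx
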